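/- Fix σ_min ∈ (0,1] and sample points X_1,…,X_n ∈ [−1,1]^d, let σ_t = 1 − (1−σ_min)t, μ_t(y) = t y, let K be the standard d-dimensional Gaussian density K(x) = (2π)^{-d/2} exp(−|x|²/2), and define p_t(x|y) = σ_t^{-d} K((x − μ_t(y))/σ_t), v_t(x|y) = (y − (1−σ_min)x)/σ_t, and v^n_t(x) = ∑_i v_t(x|X_i) p_t(x|X_i)/∑_j p_t(x|X_j). Then for every t ∈ [0,1], the map x ↦ v^n_t(x) is Lipschitz on ℝ^d with Lipschitz constant at most 1/σ_t + 2d/σ_t³. -/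

import Mathlib

open MeasureTheory

noncomputable section

/-- `σ_t = 1 − (1 − σ_min) t`. -/
def sigmaT (σmin t : ℝ) : ℝ := 1 - (1 - σmin) * t

/-- The standard `d`-dimensional Gaussian density `K(x) = (2π)^{-d/2} exp(−|x|²/2)`. -/
def gaussK {d : ℕ} (x : EuclideanSpace ℝ (Fin d)) : ℝ :=
  (2 * Real.pi) ^ (-(d : ℝ) / 2) * Real.exp (-‖x‖ ^ 2 / 2)

/-- The conditional kernel probability path
`p_t(x|y) = σ_t^{-d} K((x − μ_t(y))/σ_t)` with `μ_t(y) = t y`. -/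
def pcond {d : ℕ} (K : EuclideanSpace ℝ (Fin d) → ℝ) (σmin t : ℝ)
    (x y : EuclideanSpace ℝ (Fin d)) : ℝ :=
  ((sigmaT σmin t) ^ d)⁻¹ * K ((sigmaT σmin t)⁻¹ • (x - t • y))

/-- The conditional vector field `v_t(x|y) = (y − (1 − σ_min) x)/σ_t`. -/
def vcond {d : ℕ} (σmin t : ℝ) (x y : EuclideanSpace ℝ (Fin d)) :
    EuclideanSpace ℝ (Fin d) :=
  (sigmaT σmin t)⁻¹ • (y - (1 - σmin) • x)

/-- The empirical vector field `v^n_t(x) = ∑_i v_t(x|X_i) p_t(x|X_i)/∑_j p_t(x|X_j)`. -/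
def vnEmp {d n : ℕ} (K : EuclideanSpace ℝ (Fin d) → ℝ) (σmin : ℝ)
    (X : Fin n → EuclideanSpace ℝ (Fin d)) (t : ℝ) (x : EuclideanSpace ℝ (Fin d)) :
    EuclideanSpace ℝ (Fin d) :=
  (∑ j, pcond K σmin t x (X j))⁻¹ • ∑ i, pcond K σmin t x (X i) • vcond σmin t x (X i)

open Finset RealInnerProductSpace

/-!
Splitting off the factor of the Gaussian that does not depend on the sample point gives
`v^n_t(x) = σ_t⁻¹ (m(x) − (1 − σ_min) x)`, where `m(x)` is the mean of the `X i` under weights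
proportional to `exp (−t² ‖X i‖² / (2 σ_t²) + t ⟪X i, x⟫ / σ_t²)`. The derivative of `m` is
`t / σ_t²` times the covariance of the `X i` under these weights, whose operator norm is at most
`max ‖X i‖² ≤ d`; the mean value inequality then gives the constant
`σ_t⁻¹ (t d / σ_t² + 1 − σ_min)`.
-/

section WeightedMean

variable {ι E : Type*} [Fintype ι] [AddCommGroup E] [Module ℝ E]

def weightedMean (w : ι → ℝ) (v : ι → E) : E := (∑ i, w i)⁻¹ • ∑ i, w i • v i

theorem weightedMean_mul_left_weights {c : ℝ} (hc : c ≠ 0) (w : ι → ℝ) (v : ι → E) :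
    weightedMean (fun i => c * w i) v = weightedMean w v := by
  simp_rw [weightedMean, ← mul_sum, mul_smul, ← smul_sum, smul_smul, mul_inv_rev, mul_assoc,
    inv_mul_cancel₀ hc, mul_one]

theorem weightedMean_smul_sub {w : ι → ℝ} (hw : ∑ i, w i ≠ 0) (a : ℝ) (v : ι → E) (b : E) :
    weightedMean w (fun i => a • (v i - b)) = a • (weightedMean w v - b) := by
  have hsum : ∑ i, w i • a • (v i - b) = a • (∑ i, w i • v i - (∑ i, w i) • b) := by
    simp only [smul_sub, sum_sub_distrib, sum_smul, smul_sum, smul_comm a]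
  rw [weightedMean, weightedMean, hsum, smul_comm, smul_sub, smul_smul, inv_mul_cancel₀ hw,
    one_smul]

theorem weightedMean_eq_sum_div_smul (w : ι → ℝ) (v : ι → E) :
    weightedMean w v = ∑ i, (w i / ∑ j, w j) • v i := by
  simp only [weightedMean, smul_sum, smul_smul, div_eq_inv_mul]

end WeightedMean

section Variance

variable {ι F : Type*} [Fintype ι] [NormedAddCommGroup F] [InnerProductSpace ℝ F]
  {w : ι → ℝ} (X : ι → F)

theorem sum_inner_smul_sub_mean_eq_centered (hw : ∑ i, w i = 1) (h : F) :
    ∑ i, (w i * ⟪X i, h⟫) • (X i - ∑ j, w j • X j)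
      = ∑ i, (w i * ⟪X i - ∑ j, w j • X j, h⟫) • (X i - ∑ j, w j • X j) := by
  set m := ∑ j, w j • X j
  have hcentered : ∑ i, w i • (X i - m) = 0 := by
    simp only [smul_sub, sum_sub_distrib, ← sum_smul, hw, one_smul, m, sub_self]
  simp only [inner_sub_left, mul_sub, sub_smul, sum_sub_distrib, mul_comm (w _) ⟪m, h⟫, mul_smul,
    ← smul_sum, hcentered, smul_zero, sub_zero]

theorem sum_mul_norm_sub_mean_sq (hw : ∑ i, w i = 1) :
    ∑ i, w i * ‖X i - ∑ j, w j • X j‖ ^ 2 = ∑ i, w i * ‖X i‖ ^ 2 - ‖∑ j, w j • X j‖ ^ 2 := by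
  set m := ∑ j, w j • X j
  have hmean : ∑ i, w i * ⟪X i, m⟫ = ‖m‖ ^ 2 := by
    simp only [← real_inner_smul_left, ← sum_inner, m, real_inner_self_eq_norm_sq]
  simp only [norm_sub_sq_real, mul_add, mul_sub, sum_add_distrib, sum_sub_distrib, ← sum_mul, hw,
    one_mul, mul_left_comm (w _) 2, ← mul_sum, hmean]
  ring

theorem norm_sum_inner_smul_sub_mean_le (hw0 : ∀ i, 0 ≤ w i) (hw : ∑ i, w i = 1) {R : ℝ}
    (hR : ∀ i, ‖X i‖ ^ 2 ≤ R) (h : F) :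
    ‖∑ i, (w i * ⟪X i, h⟫) • (X i - ∑ j, w j • X j)‖ ≤ R * ‖h‖ := by
  set m := ∑ j, w j • X j
  have hsecond : ∑ i, w i * ‖X i‖ ^ 2 ≤ R :=
    calc ∑ i, w i * ‖X i‖ ^ 2 ≤ ∑ i, w i * R :=
          sum_le_sum fun i _ => mul_le_mul_of_nonneg_left (hR i) (hw0 i)
      _ = R := by rw [← sum_mul, hw, one_mul]
  calc ‖∑ i, (w i * ⟪X i, h⟫) • (X i - m)‖
      = ‖∑ i, (w i * ⟪X i - m, h⟫) • (X i - m)‖ := by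
        rw [sum_inner_smul_sub_mean_eq_centered X hw]
    _ ≤ ∑ i, w i * ‖X i - m‖ ^ 2 * ‖h‖ := by
      refine (norm_sum_le _ _).trans (sum_le_sum fun i _ => ?_)
      rw [norm_smul, norm_mul, Real.norm_of_nonneg (hw0 i)]
      calc w i * ‖⟪X i - m, h⟫‖ * ‖X i - m‖ ≤ w i * (‖X i - m‖ * ‖h‖) * ‖X i - m‖ := by
            gcongr
            exacts [hw0 i, norm_inner_le_norm _ _]
        _ = _ := by ring
    _ = (∑ i, w i * ‖X i‖ ^ 2 - ‖m‖ ^ 2) * ‖h‖ := by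
      rw [← sum_mul, sum_mul_norm_sub_mean_sq X hw]
    _ ≤ R * ‖h‖ := by gcongr; nlinarith [sq_nonneg ‖m‖]

end Variance

section Softmax

variable {ι F : Type*} [NormedAddCommGroup F] [InnerProductSpace ℝ F]

def softmaxWeight (a : ι → ℝ) (c : ℝ) (X : ι → F) (x : F) (i : ι) : ℝ :=
  a i * Real.exp (c * ⟪X i, x⟫)

variable {a : ι → ℝ} (c : ℝ) (X : ι → F)

theorem softmaxWeight_pos (ha : ∀ i, 0 < a i) (x : F) (i : ι) : 0 < softmaxWeight a c X x i :=
  mul_pos (ha i) (Real.exp_pos _)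

theorem hasFDerivAt_softmaxWeight (x : F) (i : ι) :
    HasFDerivAt (fun y => softmaxWeight a c X y i)
      ((c * softmaxWeight a c X x i) • innerSL ℝ (X i)) x := by
  have := ((((innerSL ℝ (X i)).hasFDerivAt (x := x)).const_mul c).exp).const_mul (a i)
  refine this.congr_fderiv ?_
  simp only [smul_smul, softmaxWeight, innerSL_apply_apply]
  congr 1
  ring

variable [Fintype ι]

def softmaxMean (a : ι → ℝ) (c : ℝ) (X : ι → F) (x : F) : F :=
  weightedMean (softmaxWeight a c X x) X

theorem sum_softmaxWeight_pos [Nonempty ι] (ha : ∀ i, 0 < a i) (x : F) :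
    0 < ∑ i, softmaxWeight a c X x i :=
  sum_pos (fun i _ => softmaxWeight_pos c X ha x i) univ_nonempty

theorem hasFDerivAt_softmaxMean [Nonempty ι] (ha : ∀ i, 0 < a i) (x : F) :
    HasFDerivAt (softmaxMean a c X)
      (c • ∑ i, (softmaxWeight a c X x i / ∑ j, softmaxWeight a c X x j) •
        (innerSL ℝ (X i)).smulRight (X i - softmaxMean a c X x)) x := by
  have hS := (sum_softmaxWeight_pos c X ha x).ne'
  have hinv := (hasDerivAt_inv hS).comp_hasFDerivAt x
    (HasFDerivAt.fun_sum fun j _ => hasFDerivAt_softmaxWeight c X x j)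
  have hnum := HasFDerivAt.fun_sum fun i (_ : i ∈ univ) =>
    (hasFDerivAt_softmaxWeight (a := a) c X x i).smul_const (X i)
  refine (hinv.smul hnum).congr_fderiv ?_
  ext h
  simp only [softmaxMean, weightedMean, Function.comp_apply, add_apply, smul_apply,
    ContinuousLinearMap.smulRight_apply, FunLike.coe_sum, Finset.sum_apply, smul_sub, smul_sum,
    smul_smul, sum_sub_distrib, innerSL_apply_apply, smul_eq_mul]
  rw [sub_eq_add_neg, sum_comm, ← sum_neg_distrib]
  congr 1
  · refine sum_congr rfl fun i _ => ?_
    congr 1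
    ring
  · refine sum_congr rfl fun k _ => ?_
    rw [← sum_smul, ← neg_smul, sum_mul, ← sum_neg_distrib]
    congr 1
    refine sum_congr rfl fun i _ => ?_
    field_simp

theorem lipschitzWith_softmaxMean [Nonempty ι] (ha : ∀ i, 0 < a i) (hc : 0 ≤ c) {R : ℝ}
    (hR : ∀ i, ‖X i‖ ^ 2 ≤ R) : LipschitzWith (Real.toNNReal (c * R)) (softmaxMean a c X) := by
  have hR0 : 0 ≤ R := (sq_nonneg _).trans (hR (Classical.arbitrary ι))
  rw [← lipschitzOnWith_univ]
  refine convex_univ.lipschitzOnWith_of_nnnorm_hasFDerivWithin_le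
    (fun x _ => (hasFDerivAt_softmaxMean c X ha x).hasFDerivWithinAt) fun x _ => ?_
  rw [← norm_toNNReal]
  refine Real.toNNReal_mono (ContinuousLinearMap.opNorm_le_bound _ (by positivity) fun h => ?_)
  set w := fun i => softmaxWeight a c X x i / ∑ j, softmaxWeight a c X x j
  have hS := sum_softmaxWeight_pos c X ha x
  have hw0 : ∀ i, 0 ≤ w i := fun i => (div_pos (softmaxWeight_pos c X ha x i) hS).le
  have hw1 : ∑ i, w i = 1 := by rw [← sum_div, div_self hS.ne']
  rw [softmaxMean, weightedMean_eq_sum_div_smul]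
  simp only [smul_apply, FunLike.coe_sum, Finset.sum_apply, ContinuousLinearMap.smulRight_apply,
    innerSL_apply_apply, smul_smul, norm_smul, Real.norm_of_nonneg hc, mul_assoc]
  exact mul_le_mul_of_nonneg_left (norm_sum_inner_smul_sub_mean_le X hw0 hw1 hR h) hc

end Softmax

section Gaussian

variable {d : ℕ}

theorem gaussK_sub (u v : EuclideanSpace ℝ (Fin d)) :
    gaussK (u - v) = gaussK u * Real.exp (-‖v‖ ^ 2 / 2) * Real.exp ⟪v, u⟫ := by
  simp only [gaussK, norm_sub_sq_real, real_inner_comm u v, mul_assoc, ← Real.exp_add]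
  ring_nf

theorem gaussK_pos (x : EuclideanSpace ℝ (Fin d)) : 0 < gaussK x := by
  unfold gaussK
  positivity

theorem pcond_gaussK {n : ℕ} (σmin t : ℝ) (X : Fin n → EuclideanSpace ℝ (Fin d))
    (x : EuclideanSpace ℝ (Fin d)) (i : Fin n) :
    pcond gaussK σmin t x (X i)
      = ((sigmaT σmin t ^ d)⁻¹ * gaussK ((sigmaT σmin t)⁻¹ • x))
        * softmaxWeight (fun j => Real.exp (-‖((sigmaT σmin t)⁻¹ * t) • X j‖ ^ 2 / 2))
            ((sigmaT σmin t)⁻¹ ^ 2 * t) X x i := by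
  rw [pcond, smul_sub, smul_smul, gaussK_sub, softmaxWeight, real_inner_smul_left,
    real_inner_smul_right]
  ring_nf

theorem vnEmp_gaussK {n : ℕ} [Nonempty (Fin n)] {σmin t : ℝ} (hσ : sigmaT σmin t ≠ 0)
    (X : Fin n → EuclideanSpace ℝ (Fin d)) (x : EuclideanSpace ℝ (Fin d)) :
    vnEmp gaussK σmin X t x
      = (sigmaT σmin t)⁻¹ •
        (softmaxMean (fun i => Real.exp (-‖((sigmaT σmin t)⁻¹ * t) • X i‖ ^ 2 / 2))
          ((sigmaT σmin t)⁻¹ ^ 2 * t) X x - (1 - σmin) • x) := by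
  have hC : (sigmaT σmin t ^ d)⁻¹ * gaussK ((sigmaT σmin t)⁻¹ • x) ≠ 0 :=
    mul_ne_zero (inv_ne_zero (pow_ne_zero d hσ)) (gaussK_pos _).ne'
  change weightedMean (fun i => pcond gaussK σmin t x (X i)) (fun i => vcond σmin t x (X i)) = _
  simp only [pcond_gaussK, weightedMean_mul_left_weights hC, vcond]
  exact weightedMean_smul_sub (sum_softmaxWeight_pos _ X (fun i => Real.exp_pos _) x).ne' _ X _

end Gaussian

theorem EuclideanSpace.norm_sq_le_card_of_mem_Icc {ι : Type*} [Fintype ι]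
    (x : EuclideanSpace ℝ ι) (hx : ∀ k, x k ∈ Set.Icc (-1 : ℝ) 1) :
    ‖x‖ ^ 2 ≤ Fintype.card ι := by
  rw [EuclideanSpace.real_norm_sq_eq]
  refine (sum_le_sum fun k _ => ?_).trans_eq (by simp : ∑ _k : ι, (1 : ℝ) = _)
  nlinarith [(hx k).1, (hx k).2]

theorem sigmaT_pos {σmin t : ℝ} (h0 : 0 < σmin) (h1 : σmin ≤ 1) (ht : t ≤ 1) :
    0 < sigmaT σmin t := by
  unfold sigmaT
  nlinarith

theorem empirical_vector_field_lipschitz_bound_general (d n : ℕ) (hn : 1 ≤ n)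
    (σmin : ℝ) (hσ : σmin ∈ Set.Ioc (0:ℝ) 1)
    (X : Fin n → EuclideanSpace ℝ (Fin d)) (hX : ∀ i, ∀ k, X i k ∈ Set.Icc (-1:ℝ) 1) :
    ∀ t ∈ Set.Icc (0:ℝ) 1,
      LipschitzWith
        (Real.toNNReal (1 / sigmaT σmin t + 2 * d / (sigmaT σmin t) ^ 3))
        (fun x => vnEmp gaussK σmin X t x) := by
  rintro t ⟨ht0, ht1⟩
  have : Nonempty (Fin n) := ⟨⟨0, hn⟩⟩
  have hσpos := sigmaT_pos hσ.1 hσ.2 ht1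
  set σ := sigmaT σmin t
  have hXd (i : Fin n) : ‖X i‖ ^ 2 ≤ d := by
    simpa using EuclideanSpace.norm_sq_le_card_of_mem_Icc (X i) (hX i)
  have hmean := lipschitzWith_softmaxMean (a := fun i => Real.exp (-‖(σ⁻¹ * t) • X i‖ ^ 2 / 2))
    (σ⁻¹ ^ 2 * t) X (fun i => Real.exp_pos _) (by positivity) hXd
  simp only [vnEmp_gaussK hσpos.ne']
  refine ((lipschitzWith_smul σ⁻¹).comp (hmean.sub (lipschitzWith_smul (1 - σmin)))).weaken ?_
  rw [← NNReal.coe_le_coe, Real.coe_toNNReal _ (by positivity)]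
  push_cast
  rw [Real.coe_toNNReal _ (by positivity), Real.norm_of_nonneg (by positivity),
    Real.norm_of_nonneg (by linarith [hσ.2])]
  have hσinv : 0 < σ⁻¹ := inv_pos.2 hσpos
  rw [one_div, div_eq_mul_inv, ← inv_pow]
  nlinarith [mul_nonneg (pow_pos hσinv 3).le (mul_nonneg d.cast_nonneg (by linarith : 0 ≤ 2 - t)),
    mul_pos hσinv hσ.1]

/-- **Lipschitz bound for the empirical vector field with Gaussian kernel.**
Fix `σ_min ∈ (0,1]` and sample points `X_1,…,X_n ∈ [−1,1]^d`, let `σ_t = 1 − (1−σ_min)t`,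
`μ_t(y) = ty`, let `K` be the standard `d`-dimensional Gaussian density, and define
`p_t(x|y)`, `v_t(x|y)` and `v^n_t` as above. Then for every `t ∈ [0,1]`, the map
`x ↦ v^n_t(x)` is Lipschitz on `ℝ^d` with Lipschitz constant at most `1/σ_t + 2d/σ_t³`. -/
theorem empirical_vector_field_lipschitz_bound (d n : ℕ) (hd : 1 ≤ d) (hn : 1 ≤ n)
    (σmin : ℝ) (hσ : σmin ∈ Set.Ioc (0:ℝ) 1)
    (X : Fin n → EuclideanSpace ℝ (Fin d)) (hX : ∀ i, ∀ k, X i k ∈ Set.Icc (-1:ℝ) 1) :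
    ∀ t ∈ Set.Icc (0:ℝ) 1,
      LipschitzWith
        (Real.toNNReal (1 / sigmaT σmin t + 2 * d / (sigmaT σmin t) ^ 3))
        (fun x => vnEmp gaussK σmin X t x) :=
  empirical_vector_field_lipschitz_bound_general d n hn σmin hσ X hX
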